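/- Let f and g be nonconstant meromorphic functions on ℂ having common poles, let k and n be positive integers with n>k, and let α be a nonzero meromorphic function such that (fⁿ)^{(k)}·(gⁿ)^{(k)} ≡ α² on ℂ. Then f=0 ↦ α=0, g=0 ↦ α=0, f=∞ ↦ α=∞ and g=∞ ↦ α=∞; that is, every zero of f (and of g) of multiplicity p is a zero of α of multiplicity at least p, and every pole of f (and of g) of multiplicity q is a pole of α of multiplicity at least q. -/

import Mathlib

open Complex MeasureTheory Filter Topology Polynomial
open scoped ENNReal Classical

noncomputable section

namespace Nevanlinna

/-- The positive part of the logarithm, `log⁺`. -/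
def logp (x : ℝ) : ℝ := max 0 (Real.log x)

/-- `f` is meromorphic on all of `ℂ`. -/
def Mero (f : ℂ → ℂ) : Prop := ∀ z : ℂ, MeromorphicAt f z

/-- `f` is nonconstant. -/
def Nonconst (f : ℂ → ℂ) : Prop := ¬ ∃ c : ℂ, ∀ z, f z = c

/-- The divisor of a meromorphic function: the order of the zero (positive) or pole
(negative) at `z`; junk value `0` at points where `f` is not meromorphic or vanishes
identically near `z`. -/
def div (f : ℂ → ℂ) (z : ℂ) : ℤ :=
  if h : MeromorphicAt f z then ((meromorphicOrderAt f z).untopD 0) else 0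

/-- Multiplicity of `z` as an `a`-point of `f`. -/
def zmult (f : ℂ → ℂ) (a : ℂ) (z : ℂ) : ℕ := (div (fun w => f w - a) z).toNat

/-- Multiplicity of `z` as a pole of `f`. -/
def pmult (f : ℂ → ℂ) (z : ℂ) : ℕ := (-(div f z)).toNat

/-- `z` is a pole of `f`. -/
def IsPole (f : ℂ → ℂ) (z : ℂ) : Prop := div f z < 0

/-- Unintegrated counting function attached to a multiplicity function `m`. -/
def ncnt (m : ℂ → ℕ) (t : ℝ) : ℝ := ∑ᶠ z ∈ {z : ℂ | ‖z‖ ≤ t}, (m z : ℝ)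

/-- Integrated (Nevanlinna) counting function attached to a multiplicity function `m`. -/
def Ncnt (m : ℂ → ℕ) (r : ℝ) : ℝ :=
  (∫ t in (0:ℝ)..r, (ncnt m t - ncnt m 0) / t) + ncnt m 0 * Real.log r

/-- `N(r, a; f)`, counted with multiplicity. -/
def Nzero (f : ℂ → ℂ) (a : ℂ) (r : ℝ) : ℝ := Ncnt (zmult f a) r

/-- `N(r, f) = N(r, ∞; f)`, counted with multiplicity. -/
def Npole (f : ℂ → ℂ) (r : ℝ) : ℝ := Ncnt (pmult f) r

/-- `N̄(r, a; f)`, multiplicities ignored. -/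
def Nzerobar (f : ℂ → ℂ) (a : ℂ) (r : ℝ) : ℝ := Ncnt (fun z => min 1 (zmult f a z)) r

/-- `N̄(r, f)`, multiplicities ignored. -/
def Npolebar (f : ℂ → ℂ) (r : ℝ) : ℝ := Ncnt (fun z => min 1 (pmult f z)) r

/-- The Nevanlinna proximity function `m(r, f)`. -/
def prox (f : ℂ → ℂ) (r : ℝ) : ℝ :=
  (2 * Real.pi)⁻¹ *
    ∫ θ in (0:ℝ)..(2 * Real.pi), logp ‖f (r * Complex.exp (θ * Complex.I))‖

/-- The Nevanlinna characteristic `T(r, f)`. -/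
def T (f : ℂ → ℂ) (r : ℝ) : ℝ := prox f r + Npole f r

/-- The growth exponent `limsup log⁺ N(r) / log r` of a real function. -/
def growthExp (N : ℝ → ℝ) : ℝ≥0∞ :=
  Filter.limsup (fun r => ENNReal.ofReal (logp (N r) / Real.log r)) Filter.atTop

/-- The order `ρ(f)`. -/
def rho (f : ℂ → ℂ) : ℝ≥0∞ := growthExp (T f)

/-- The hyper-order `ρ₂(f)`. -/
def rho2 (f : ℂ → ℂ) : ℝ≥0∞ := growthExp (fun r => logp (T f r))

/-- The lower order `μ(f)`. -/
def mu (f : ℂ → ℂ) : ℝ≥0∞ :=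
  Filter.liminf (fun r => ENNReal.ofReal (logp (T f r) / Real.log r)) Filter.atTop

/-- `ρ₁(0; f)`, the exponent of convergence of the zeros of `f`. -/
def rho1Zero (f : ℂ → ℂ) : ℝ≥0∞ := growthExp (Nzero f 0)

/-- `ρ₁(∞; f)`, the exponent of convergence of the poles of `f`. -/
def rho1Pole (f : ℂ → ℂ) : ℝ≥0∞ := growthExp (Npole f)

/-- `ρ̄₁(0; f)`. -/
def rho1barZero (f : ℂ → ℂ) : ℝ≥0∞ := growthExp (Nzerobar f 0)

/-- `ρ̄₁(∞; f)`. -/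
def rho1barPole (f : ℂ → ℂ) : ℝ≥0∞ := growthExp (Npolebar f)

/-- `N = S(r, f)`: `N(r) = o(T(r, f))` as `r → ∞` outside a set of finite linear measure. -/
def SmallQty (N : ℝ → ℝ) (f : ℂ → ℂ) : Prop :=
  ∃ E : Set ℝ, volume E ≠ ⊤ ∧
    ∀ ε : ℝ, 0 < ε → ∀ᶠ r in atTop, r ∉ E → N r ≤ ε * T f r

/-- `a` is a small function of `f`: `T(r, a) = S(r, f)`. -/
def SmallFn (a f : ℂ → ℂ) : Prop := SmallQty (T a) f

/-- `0` is a Borel exceptional value of `f`. -/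
def BorelZero (f : ℂ → ℂ) : Prop :=
  (0 < rho f ∧ rho1Zero f < rho f) ∨
  (rho f = 0 ∧ (fun r => Nzero f 0 r) =O[atTop] Real.log)

/-- `∞` is a Borel exceptional value of `f`. -/
def BorelPole (f : ℂ → ℂ) : Prop :=
  (0 < rho f ∧ rho1Pole f < rho f) ∨
  (rho f = 0 ∧ (fun r => Npole f r) =O[atTop] Real.log)

/-- A nonzero meromorphic function on `ℂ`. -/
def NonzeroMero (f : ℂ → ℂ) : Prop := Mero f ∧ ∃ z, AnalyticAt ℂ f z ∧ f z ≠ 0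

/-- `f` and `g` have common poles. -/
def CommonPoles (f g : ℂ → ℂ) : Prop := ∀ z, IsPole f z ↔ IsPole g z

/-- `f = 0 ↦ α = 0`: every zero of `f` of multiplicity `p` is a zero of `α` of
multiplicity at least `p`. -/
def ZeroMapsTo (f α : ℂ → ℂ) : Prop := ∀ z, 0 < div f z → div f z ≤ div α z

/-- `f = ∞ ↦ α = ∞`: every pole of `f` of multiplicity `p` is a pole of `α` of
multiplicity at least `p`. -/
def PoleMapsTo (f α : ℂ → ℂ) : Prop := ∀ z, div f z < 0 → div α z ≤ div f z

/-- The differential equation `(fⁿ)⁽ᵏ⁾ (gⁿ)⁽ᵏ⁾ ≡ α²`, as an identity at all points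
where `f` and `g` are analytic. -/
def MainEq (f g α : ℂ → ℂ) (n k : ℕ) : Prop :=
  ∀ z, AnalyticAt ℂ f z → AnalyticAt ℂ g z →
    iteratedDeriv k (fun w => f w ^ n) z * iteratedDeriv k (fun w => g w ^ n) z = α z ^ 2

/-- `f` is a polynomial function. -/
def IsPoly (f : ℂ → ℂ) : Prop := ∃ p : Polynomial ℂ, ∀ z, f z = p.eval z

/-- `f` is a transcendental entire function. -/
def TransEntire (f : ℂ → ℂ) : Prop := Differentiable ℂ f ∧ ¬ IsPoly f

/-- `R` is a (nonzero) rational function of degree `d = deg P − deg Q` for a coprime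
representation `R = P/Q`. -/
def RatWithDeg (R : ℂ → ℂ) (d : ℤ) : Prop :=
  ∃ p q : Polynomial ℂ, p ≠ 0 ∧ q ≠ 0 ∧ IsCoprime p q ∧
    (∀ z, q.eval z ≠ 0 → R z = p.eval z / q.eval z) ∧
    d = (p.natDegree : ℤ) - (q.natDegree : ℤ)

/-- `R` is a nonzero rational function. -/
def IsRat (R : ℂ → ℂ) : Prop := ∃ d : ℤ, RatWithDeg R d

/-- `R` is a rational function (possibly zero). -/
def IsRatFn (R : ℂ → ℂ) : Prop :=
  ∃ p q : Polynomial ℂ, q ≠ 0 ∧ ∀ z, q.eval z ≠ 0 → R z = p.eval z / q.eval z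

end Nevanlinna

/-! At a zero or pole of `f` of order `a ≠ 0`, the function `(fⁿ)⁽ᵏ⁾` has order exactly `na - k`:
since `n > k`, the order `na` of `fⁿ` avoids `{0, …, k - 1}`, the only orders that `k`
differentiations do not lower by exactly `k`.
The equation then reads `2 ord α = (na - k) + ord (gⁿ)⁽ᵏ⁾`. At a zero of `f`, `g` has no pole, so
the last term is `≥ 0`; at a pole of `f` it equals `nb - k` with `b < 0`. As `n ≥ 2`, this forces
`ord α ≥ a`, resp. `ord α ≤ a`. The order of `α` is finite everywhere because `α` is meromorphic on
the connected plane and nonzero somewhere. -/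

section IteratedDeriv

variable {𝕜 : Type*} [NontriviallyNormedField 𝕜]
  {E : Type*} [NormedAddCommGroup E] [NormedSpace 𝕜 E] {f φ : 𝕜 → E} {x : 𝕜}

theorem Filter.EventuallyEq.nhdsNE_iteratedDeriv (h : f =ᶠ[𝓝[≠] x] φ) (k : ℕ) :
    iteratedDeriv k f =ᶠ[𝓝[≠] x] iteratedDeriv k φ := by
  induction k with
  | zero => simpa using h
  | succ k ih => simpa only [iteratedDeriv_succ] using ih.nhdsNE_deriv

variable [CompleteSpace E]

theorem MeromorphicAt.meromorphicOrderAt_iteratedDeriv_nonneg (hf : MeromorphicAt f x)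
    (h : 0 ≤ meromorphicOrderAt f x) (k : ℕ) :
    0 ≤ meromorphicOrderAt (iteratedDeriv k f) x := by
  obtain ⟨φ, hφ, hfφ⟩ := hf.meromorphicOrderAt_nonneg_iff.mp h
  rw [meromorphicOrderAt_congr (hfφ.nhdsNE_iteratedDeriv k), iteratedDeriv_eq_iterate]
  exact (hφ.iterated_deriv k).meromorphicOrderAt_nonneg

theorem MeromorphicAt.meromorphicOrderAt_fun_pow_nonneg {f : 𝕜 → 𝕜} (hf : MeromorphicAt f x)
    (h : 0 ≤ meromorphicOrderAt f x) (n : ℕ) : 0 ≤ meromorphicOrderAt (fun w => f w ^ n) x := by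
  obtain ⟨φ, hφ, hfφ⟩ := hf.meromorphicOrderAt_nonneg_iff.mp h
  have hfφn : (fun w => f w ^ n) =ᶠ[𝓝[≠] x] fun w => φ w ^ n := hfφ.fun_comp (· ^ n)
  rw [meromorphicOrderAt_congr hfφn]
  exact (hφ.pow n).meromorphicOrderAt_nonneg

variable [CharZero 𝕜]

theorem meromorphicOrderAt_iteratedDeriv {m : ℤ} (h : meromorphicOrderAt f x = m) {k : ℕ}
    (hmk : m < 0 ∨ k ≤ m) : meromorphicOrderAt (iteratedDeriv k f) x = ↑(m - k) := by
  induction k with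
  | zero => simpa using h
  | succ k ih =>
    have hmk' : ((m - k : ℤ) : 𝕜) ≠ 0 := Int.cast_ne_zero.mpr (by omega)
    rw [iteratedDeriv_succ, meromorphicOrderAt_deriv_eq_sub_one hmk' (ih (by omega))]
    congr 1
    push_cast
    ring

theorem meromorphicOrderAt_iteratedDeriv_pow [CompleteSpace 𝕜] {f : 𝕜 → 𝕜} {a : ℤ}
    (h : meromorphicOrderAt f x = a) (ha : a ≠ 0) {k n : ℕ} (hkn : k < n) :
    meromorphicOrderAt (iteratedDeriv k fun w => f w ^ n) x = ↑(n * a - k) := by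
  have hf : MeromorphicAt f x := meromorphicAt_of_meromorphicOrderAt_ne_zero (by simp [h, ha])
  refine meromorphicOrderAt_iteratedDeriv (by rw [fun_meromorphicOrderAt_pow hf, h]; norm_cast) ?_
  rcases ha.lt_or_gt with ha | ha
  · exact Or.inl (by nlinarith)
  · exact Or.inr (by nlinarith)

end IteratedDeriv

namespace Nevanlinna

variable {f g α : ℂ → ℂ} {n k : ℕ}

theorem meromorphicOrderAt_eq_div {z : ℂ} (h : div f z ≠ 0) :
    meromorphicOrderAt f z = div f z := by
  unfold div at h ⊢
  split_ifs at h ⊢ with hf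
  · cases ho : meromorphicOrderAt f z <;> simp_all
  · exact absurd rfl h

theorem div_eq_of_meromorphicOrderAt_eq {z : ℂ} {m : ℤ} (hf : MeromorphicAt f z)
    (h : meromorphicOrderAt f z = m) : div f z = m := by
  simp [div, hf, h]

theorem meromorphicOrderAt_nonneg_of_div_nonneg {z : ℂ} (hf : MeromorphicAt f z)
    (h : 0 ≤ div f z) : 0 ≤ meromorphicOrderAt f z := by
  cases ho : meromorphicOrderAt f z with
  | top => exact le_top
  | coe m => exact_mod_cast div_eq_of_meromorphicOrderAt_eq hf ho ▸ h

theorem CommonPoles.symm (h : CommonPoles f g) : CommonPoles g f := fun z => (h z).symm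

theorem MainEq.symm (h : MainEq f g α n k) : MainEq g f α n k :=
  fun z hgz hfz => by rw [mul_comm]; exact h z hfz hgz

theorem NonzeroMero.meromorphicOrderAt_ne_top (hα : NonzeroMero α) (z : ℂ) :
    meromorphicOrderAt α z ≠ ⊤ := by
  obtain ⟨hαm, z₀, hαz₀, hαz₀_ne⟩ := hα
  refine MeromorphicOn.meromorphicOrderAt_ne_top_of_isPreconnected (fun w _ => hαm w)
    isPreconnected_univ (Set.mem_univ z₀) (Set.mem_univ z) ?_
  simp [hαz₀.meromorphicOrderAt_eq, hαz₀.analyticOrderAt_eq_zero.mpr hαz₀_ne]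

theorem MainEq.two_mul_meromorphicOrderAt (heq : MainEq f g α n k) (hf : Mero f) (hg : Mero g)
    (hα : Mero α) (z : ℂ) :
    2 * meromorphicOrderAt α z =
      meromorphicOrderAt (iteratedDeriv k fun w => f w ^ n) z +
        meromorphicOrderAt (iteratedDeriv k fun w => g w ^ n) z := by
  have hsq : (fun w => α w ^ 2) =ᶠ[𝓝[≠] z]
      fun w => iteratedDeriv k (fun w => f w ^ n) w * iteratedDeriv k (fun w => g w ^ n) w := by
    filter_upwards [(hf z).eventually_analyticAt, (hg z).eventually_analyticAt] with w hfw hgw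
    exact (heq w hfw hgw).symm
  have hDf : MeromorphicAt (iteratedDeriv k fun w => f w ^ n) z := by
    rw [iteratedDeriv_eq_iterate]; exact ((hf z).fun_pow n).iterated_deriv
  have hDg : MeromorphicAt (iteratedDeriv k fun w => g w ^ n) z := by
    rw [iteratedDeriv_eq_iterate]; exact ((hg z).fun_pow n).iterated_deriv
  rw [← fun_meromorphicOrderAt_mul hDf hDg, ← meromorphicOrderAt_congr hsq,
    fun_meromorphicOrderAt_pow (hα z)]
  norm_cast

theorem MainEq.zeroMapsTo (heq : MainEq f g α n k) (hk : 0 < k) (hn : k < n) (hf : Mero f)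
    (hg : Mero g) (hα : NonzeroMero α) (hcp : CommonPoles f g) : ZeroMapsTo f α := by
  intro z hz
  have hg_nonneg : 0 ≤ meromorphicOrderAt (fun w => g w ^ n) z := by
    have hdiv : 0 ≤ div g z := not_lt.mp fun hpole => ((hcp z).mpr hpole).not_gt hz
    exact (hg z).meromorphicOrderAt_fun_pow_nonneg
      (meromorphicOrderAt_nonneg_of_div_nonneg (hg z) hdiv) n
  obtain ⟨c, hc⟩ := WithTop.ne_top_iff_exists.mp (hα.meromorphicOrderAt_ne_top z)
  have horder := heq.two_mul_meromorphicOrderAt hf hg hα.1 z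
  rw [← hc, ← WithTop.coe_ofNat, ← WithTop.coe_mul,
    meromorphicOrderAt_iteratedDeriv_pow (meromorphicOrderAt_eq_div hz.ne') hz.ne' hn] at horder
  cases he : meromorphicOrderAt (iteratedDeriv k fun w => g w ^ n) z with
  | top => rw [he, WithTop.add_top] at horder; exact absurd horder WithTop.coe_ne_top
  | coe e =>
    have he_nonneg : 0 ≤ e := by
      exact_mod_cast he ▸ ((hg z).fun_pow n).meromorphicOrderAt_iteratedDeriv_nonneg hg_nonneg k
    rw [he] at horder
    have hce : 2 * c = n * div f z - k + e := by exact_mod_cast horder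
    rw [div_eq_of_meromorphicOrderAt_eq (hα.1 z) hc.symm]
    nlinarith [mul_nonneg (show (0 : ℤ) ≤ div f z - 1 by omega) (show (0 : ℤ) ≤ n - 2 by omega)]

theorem MainEq.poleMapsTo (heq : MainEq f g α n k) (hk : 0 < k) (hn : k < n) (hf : Mero f)
    (hg : Mero g) (hα : NonzeroMero α) (hcp : CommonPoles f g) : PoleMapsTo f α := by
  intro z hz
  have hgz : div g z < 0 := (hcp z).mp hz
  obtain ⟨c, hc⟩ := WithTop.ne_top_iff_exists.mp (hα.meromorphicOrderAt_ne_top z)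
  have horder := heq.two_mul_meromorphicOrderAt hf hg hα.1 z
  rw [← hc, ← WithTop.coe_ofNat, ← WithTop.coe_mul,
    meromorphicOrderAt_iteratedDeriv_pow (meromorphicOrderAt_eq_div hz.ne) hz.ne hn,
    meromorphicOrderAt_iteratedDeriv_pow (meromorphicOrderAt_eq_div hgz.ne) hgz.ne hn] at horder
  have hce : 2 * c = n * div f z - k + (n * div g z - k) := by exact_mod_cast horder
  rw [div_eq_of_meromorphicOrderAt_eq (hα.1 z) hc.symm]
  nlinarith [mul_nonneg (show (0 : ℤ) ≤ -div f z by omega) (show (0 : ℤ) ≤ n - 2 by omega)]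

theorem stmt6_general (f g α : ℂ → ℂ) (k n : ℕ)
    (hk : 0 < k) (hn : k < n)
    (hf : Mero f) (hg : Mero g)
    (hα : NonzeroMero α)
    (hcp : CommonPoles f g)
    (heq : MainEq f g α n k) :
    ZeroMapsTo f α ∧ ZeroMapsTo g α ∧ PoleMapsTo f α ∧ PoleMapsTo g α :=
  ⟨heq.zeroMapsTo hk hn hf hg hα hcp, heq.symm.zeroMapsTo hk hn hg hf hα hcp.symm,
    heq.poleMapsTo hk hn hf hg hα hcp, heq.symm.poleMapsTo hk hn hg hf hα hcp.symm⟩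

/-- Zeros and poles of `f` and `g` map to zeros and poles of `α`, with at least the
same multiplicity, when `f` and `g` have common poles. -/
theorem stmt6 (f g α : ℂ → ℂ) (k n : ℕ)
    (hk : 0 < k) (hn : k < n)
    (hf : Mero f) (hg : Mero g) (hfnc : Nonconst f) (hgnc : Nonconst g)
    (hα : NonzeroMero α)
    (hcp : CommonPoles f g)
    (heq : MainEq f g α n k) :
    ZeroMapsTo f α ∧ ZeroMapsTo g α ∧ PoleMapsTo f α ∧ PoleMapsTo g α :=
  stmt6_general f g α k n hk hn hf hg hα hcp heq

end Nevanlinna
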